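/- Case (IV), classification: Every irreducible case-IV representation (V, ρ, X, Y) is isomorphic to L(η) for some character η of Γ with η|_Λ = ξ, where an isomorphism of representations is a linear isomorphism intertwining X, Y and every ρ(h). -/

import Mathlib

/-!
`Y` is nilpotent, so `ker Y ≠ 0`; it is stable under the commuting operators `ρ(h)` and hence
contains a common eigenvector `v₀`, whose eigenvalues form a character `η`, equal to `ξ` on `Λ`.
The vectors `v_i = X^i v₀` are weight vectors of weight `η χ₁^i`, and the commutation relation
gives `Y v_{i+1} = c_{i+1} v_i`. So they span a subrepresentation, which is all of `V`; the nonzero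
ones `v₀, …, v_{N-1}` have the distinct `ρ(g₁)`-eigenvalues `η(g₁) q^i` and form a basis in which
`X`, `Y`, `ρ` act as on `L(η)`. Finally `Y v_N = 0` forces `c_N = 0`, while `c_m = 0` with
`0 < m < N` would make `v_m, v_{m+1}, …` span a proper subrepresentation.
-/

noncomputable section

/-- `(V, ρ, X, Y)` is a representation of the common part of the rank-2 algebra `A(ξ)`:
`ρ` is a group homomorphism (recorded via multiplicativity and unitality),
`ρ(h)∘X = χ₁(h)·(X∘ρ(h))` and `ρ(h)∘Y = χ₂(h)·(Y∘ρ(h))` for all `h ∈ Γ`, and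
`ρ(g) = ξ(g)·id` for all `g ∈ Λ`. -/
def IsRep {Γ : Type*} [CommGroup Γ] (χ₁ χ₂ : Γ →* ℂˣ) (Λ : Subgroup Γ) (ξ : ↥Λ →* ℂˣ)
    {V : Type*} [AddCommGroup V] [Module ℂ V]
    (ρ : Γ → Module.End ℂ V) (X Y : Module.End ℂ V) : Prop :=
  (∀ a b : Γ, ρ (a * b) = ρ a * ρ b) ∧ ρ 1 = 1 ∧
  (∀ h : Γ, ρ h * X = (χ₁ h : ℂ) • (X * ρ h)) ∧
  (∀ h : Γ, ρ h * Y = (χ₂ h : ℂ) • (Y * ρ h)) ∧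
  ∀ g : Λ, ρ (g : Γ) = (ξ g : ℂ) • (1 : Module.End ℂ V)

/-- A subspace `W` is stable under `X`, `Y` and all `ρ(h)`. -/
def Stable2 {Γ : Type*} {V : Type*} [AddCommGroup V] [Module ℂ V]
    (ρ : Γ → Module.End ℂ V) (X Y : Module.End ℂ V) (W : Submodule ℂ V) : Prop :=
  (∀ v ∈ W, X v ∈ W) ∧ (∀ v ∈ W, Y v ∈ W) ∧ ∀ h : Γ, ∀ v ∈ W, ρ h v ∈ W

/-- Irreducibility: `V ≠ 0` and the only subspaces stable under `X`, `Y` and all `ρ(h)`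
are `0` and `V`. -/
def Irred2 {Γ : Type*} {V : Type*} [AddCommGroup V] [Module ℂ V]
    (ρ : Γ → Module.End ℂ V) (X Y : Module.End ℂ V) : Prop :=
  (∃ v : V, v ≠ 0) ∧ ∀ W : Submodule ℂ V, Stable2 ρ X Y W → W = ⊥ ∨ W = ⊤

/-- The sequence `c_i` defined by `c₀ = c` and
`c_i = q·(c_{i−1} + ν − ν·q^{2(i−1)}·γ)` for `i ≥ 1`. -/
def cseq (q ν γ c : ℂ) : ℕ → ℂ
  | 0 => c
  | i + 1 => q * (cseq q ν γ c i + ν - ν * q ^ (2 * i) * γ)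

/-- `(V, ρ, X, Y)` is a case-IV representation: a representation with in addition
`X^r = 0`, `Y^r = 0` and `X∘Y = q⁻¹·(Y∘X) + ρ(g₁g₂) − id`, where `q = χ₁(g₁)`. -/
def IsRepIV {Γ : Type*} [CommGroup Γ] (g₁ g₂ : Γ) (χ₁ χ₂ : Γ →* ℂˣ)
    (Λ : Subgroup Γ) (ξ : ↥Λ →* ℂˣ) (r : ℕ)
    {V : Type*} [AddCommGroup V] [Module ℂ V]
    (ρ : Γ → Module.End ℂ V) (X Y : Module.End ℂ V) : Prop :=
  IsRep χ₁ χ₂ Λ ξ ρ X Y ∧ X ^ r = 0 ∧ Y ^ r = 0 ∧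
    X * Y = (((χ₁ g₁ : ℂˣ) : ℂ))⁻¹ • (Y * X) + ρ (g₁ * g₂) - 1

/-- The action of `h ∈ Γ` on `L(η)`, with `ρ(h)·v_i = η(h)·χ₁(h)^i·v_i` on the basis
`v₀, …, v_{N−1}` of `Fin N → ℂ`. -/
def fRho (N : ℕ) {Γ : Type*} [CommGroup Γ] (χ₁ η : Γ →* ℂˣ) (h : Γ) :
    Module.End ℂ (Fin N → ℂ) where
  toFun v := fun j => (η h : ℂ) * (χ₁ h : ℂ) ^ (j : ℕ) * v j
  map_add' v w := by funext j; simp [mul_add]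
  map_smul' a v := by funext j; simp [smul_eq_mul]; ring

/-- The operator `X` on `L(η)`, with `X·v_i = v_{i+1}` and `v_N := 0`. -/
def fX (N : ℕ) : Module.End ℂ (Fin N → ℂ) where
  toFun v := fun j => if h : (j : ℕ) = 0 then 0
    else v ⟨(j : ℕ) - 1, lt_of_le_of_lt (Nat.sub_le _ 1) j.isLt⟩
  map_add' v w := by funext j; by_cases h : (j : ℕ) = 0 <;> simp [h]
  map_smul' a v := by funext j; by_cases h : (j : ℕ) = 0 <;> simp [h]

/-- The operator `Y` on `L(η)`, with `Y·v_i = c_i·v_{i−1}` and `v_{−1} := 0`. -/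
def fY (N : ℕ) (cs : ℕ → ℂ) : Module.End ℂ (Fin N → ℂ) where
  toFun v := fun j => if h : (j : ℕ) + 1 < N then cs ((j : ℕ) + 1) * v ⟨(j : ℕ) + 1, h⟩ else 0
  map_add' v w := by funext j; by_cases h : (j : ℕ) + 1 < N <;> simp [h, mul_add]
  map_smul' a v := by
    funext j; by_cases h : (j : ℕ) + 1 < N <;> simp [h, smul_eq_mul] <;> ring

theorem exists_common_eigenvector_of_commute {K V ι : Type*} [Field K] [IsAlgClosed K]
    [AddCommGroup V] [Module K V] [FiniteDimensional K V]
    (f : ι → Module.End K V) (hf : ∀ i j, Commute (f i) (f j))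
    (W : Submodule K V) (hW : W ≠ ⊥) (hfW : ∀ i, ∀ w ∈ W, f i w ∈ W) :
    ∃ v ∈ W, v ≠ 0 ∧ ∀ i, ∃ μ : K, f i v = μ • v := by
  obtain ⟨U, ⟨hUW, hU, hfU⟩, hUmin⟩ := wellFounded_lt.has_min
    {U : Submodule K V | U ≤ W ∧ U ≠ ⊥ ∧ ∀ i, ∀ u ∈ U, f i u ∈ U} ⟨W, le_rfl, hW, hfW⟩
  obtain ⟨v, hvU, hv⟩ := Submodule.exists_mem_ne_zero_of_ne_bot hU
  refine ⟨v, hUW hvU, hv, fun i => ?_⟩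
  have : Nontrivial U := Submodule.nontrivial_iff_ne_bot.mpr hU
  obtain ⟨μ, hμ⟩ := Module.End.exists_eigenvalue ((f i).restrict (hfU i))
  obtain ⟨u, hu⟩ := hμ.exists_hasEigenvector
  -- the `μ`-eigenspace of `f i` in `U` is again invariant, so by minimality it is all of `U`
  have hU' : U ⊓ (f i).eigenspace μ ≠ ⊥ := by
    refine Submodule.ne_bot_iff _ |>.mpr ⟨u, ⟨u.2, ?_⟩, by simpa using hu.2⟩
    simpa [Subtype.ext_iff] using hu.apply_eq_smul
  have hUeq : U ⊓ (f i).eigenspace μ = U := by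
    by_contra hne
    refine hUmin _ ⟨inf_le_left.trans hUW, hU', fun j u hu =>
      ⟨hfU j u hu.1, Module.End.mapsTo_genEigenspace_of_comm (hf i j) μ 1 hu.2⟩⟩ ?_
    exact lt_of_le_of_ne inf_le_left hne
  exact ⟨μ, Module.End.mem_eigenspace_iff.mp (hUeq.symm ▸ hvU : v ∈ U ⊓ _).2⟩

theorem exists_monoidHom_of_common_eigenvector {G K V : Type*} [Group G] [Field K]
    [AddCommGroup V] [Module K V] (ρ : G → Module.End K V)
    (hmul : ∀ a b, ρ (a * b) = ρ a * ρ b) (hone : ρ 1 = 1)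
    {v : V} (hv : v ≠ 0) (hρv : ∀ g, ∃ μ : K, ρ g v = μ • v) :
    ∃ η : G →* Kˣ, ∀ g, ρ g v = (η g : K) • v := by
  choose μ hμ using hρv
  have hinj := smul_left_injective K hv
  let μ' : G →* K :=
    { toFun := μ
      map_one' := hinj <| by simp only [← hμ, hone, Module.End.one_apply, one_smul]
      map_mul' := fun a b => hinj <| by
        change μ (a * b) • v = (μ a * μ b) • v
        rw [← hμ, hmul, Module.End.mul_apply, hμ, map_smul, hμ, smul_smul, mul_comm] }
  exact ⟨μ'.toHomUnits, hμ⟩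

theorem Module.End.apply_pow_apply_of_mul_eq_smul_mul {K V : Type*} [CommRing K]
    [AddCommGroup V] [Module K V] {T X : Module.End K V} {a μ : K}
    (hTX : T * X = a • (X * T)) {v : V} (hv : T v = μ • v) (i : ℕ) :
    T ((X ^ i) v) = (μ * a ^ i) • (X ^ i) v := by
  induction i with
  | zero => simpa using hv
  | succ i ih =>
    rw [pow_succ', Module.End.mul_apply, ← Module.End.mul_apply T, hTX, LinearMap.smul_apply,
      Module.End.mul_apply, ih, map_smul, smul_smul, pow_succ]
    congr 1; ring

theorem apply_pow_succ_apply_eq_cseq_smul {V : Type*} [AddCommGroup V] [Module ℂ V]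
    {X Y K : Module.End ℂ V} {q γ : ℂ} (hq : q ≠ 0)
    (hXY : X * Y = q⁻¹ • (Y * X) + K - 1) (hKX : K * X = q ^ 2 • (X * K))
    {v : V} (hYv : Y v = 0) (hKv : K v = γ • v) (i : ℕ) :
    Y ((X ^ (i + 1)) v) = cseq q 1 γ 0 (i + 1) • (X ^ i) v := by
  have hYX : ∀ w, Y (X w) = q • (X (Y w) - K w + w) := fun w => by
    have h := LinearMap.congr_fun hXY w
    simp only [Module.End.mul_apply, LinearMap.sub_apply, LinearMap.add_apply,
      LinearMap.smul_apply, Module.End.one_apply] at h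
    rw [h]
    match_scalars <;> field_simp <;> ring
  have hK : ∀ j, K ((X ^ j) v) = (γ * q ^ (2 * j)) • (X ^ j) v := fun j => by
    rw [pow_mul]; exact Module.End.apply_pow_apply_of_mul_eq_smul_mul hKX hKv j
  induction i with
  | zero =>
    rw [pow_one, hYX, hYv, map_zero, hKv]
    simp only [cseq, pow_zero, Module.End.one_apply]; match_scalars; ring
  | succ i ih =>
    rw [pow_succ', Module.End.mul_apply, hYX, ih, map_smul, ← Module.End.mul_apply X,
      ← pow_succ', hK]
    simp only [cseq]; match_scalars; ring

theorem Module.End.linearIndependent_pow_apply {K V : Type*} [Field K] [AddCommGroup V]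
    [Module K V] {T X : Module.End K V} {a μ : K} {r N : ℕ} (ha : IsPrimitiveRoot a r)
    (hN : N ≤ r) (hμ : μ ≠ 0) (hTX : T * X = a • (X * T)) {v : V} (hv : T v = μ • v)
    (hXv : ∀ i < N, (X ^ i) v ≠ 0) :
    LinearIndependent K fun i : Fin N => (X ^ (i : ℕ)) v :=
  Module.End.eigenvectors_linearIndependent' T (fun i : Fin N => μ * a ^ (i : ℕ))
    (fun i j h => Fin.ext <| ha.pow_inj (i.2.trans_le hN) (j.2.trans_le hN)
      (mul_left_cancel₀ hμ h))
    _ fun i => ⟨Module.End.mem_eigenspace_iff.mpr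
      (Module.End.apply_pow_apply_of_mul_eq_smul_mul hTX hv i), hXv i i.2⟩

/-- The coordinate vector of `v_i` in `L(η)`; it is `0` once `N ≤ i`, matching `v_N := 0`. -/
def natSingle (K : Type*) [Zero K] [One K] (N i : ℕ) : Fin N → K :=
  fun k => if (k : ℕ) = i then 1 else 0

theorem exists_linearEquiv_apply_eq_natSingle {K V : Type*} [Field K] [AddCommGroup V]
    [Module K V] {N : ℕ} {v : ℕ → V} (hli : LinearIndependent K fun i : Fin N => v i)
    (hsp : Submodule.span K (Set.range v) = ⊤) (hvN : ∀ i, N ≤ i → v i = 0) :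
    ∃ φ : V ≃ₗ[K] (Fin N → K), ∀ i, φ (v i) = natSingle K N i := by
  classical
  have hsp' : ⊤ ≤ Submodule.span K (Set.range fun i : Fin N => v i) := by
    rw [← hsp, Submodule.span_le]
    rintro _ ⟨i, rfl⟩
    rcases lt_or_ge i N with hi | hi
    · exact Submodule.subset_span ⟨⟨i, hi⟩, rfl⟩
    · rw [hvN i hi]; exact Submodule.zero_mem _
  let B := Module.Basis.mk hli hsp'
  refine ⟨B.equivFun, fun i => funext fun k => ?_⟩
  rcases lt_or_ge i N with hi | hi
  · rw [← Module.Basis.mk_apply hli hsp' ⟨i, hi⟩, B.equivFun_self]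
    simp [natSingle, Fin.ext_iff, eq_comm]
  · rw [hvN i hi, map_zero]
    simp only [natSingle, Pi.zero_apply]
    exact (if_neg (by omega)).symm

theorem fX_natSingle (N i : ℕ) : fX N (natSingle ℂ N i) = natSingle ℂ N (i + 1) := by
  funext k
  simp only [fX, natSingle, LinearMap.coe_mk, AddHom.coe_mk]
  split_ifs <;> first | rfl | omega

theorem fY_natSingle_zero (N : ℕ) (c : ℕ → ℂ) : fY N c (natSingle ℂ N 0) = 0 := by
  funext k
  simp [fY, natSingle]

theorem fY_natSingle_succ {N i : ℕ} (hi : i + 1 < N) (c : ℕ → ℂ) :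
    fY N c (natSingle ℂ N (i + 1)) = c (i + 1) • natSingle ℂ N i := by
  funext k
  simp only [fY, natSingle, LinearMap.coe_mk, AddHom.coe_mk, Pi.smul_apply, smul_eq_mul]
  split_ifs <;> first | omega | simp_all

theorem fRho_natSingle {Γ : Type*} [CommGroup Γ] (N i : ℕ) (χ₁ η : Γ →* ℂˣ) (h : Γ) :
    fRho N χ₁ η h (natSingle ℂ N i) = ((η h : ℂ) * (χ₁ h : ℂ) ^ i) • natSingle ℂ N i := by
  funext k
  simp only [fRho, natSingle, LinearMap.coe_mk, AddHom.coe_mk, Pi.smul_apply, smul_eq_mul]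
  split_ifs with hk <;> simp [hk]

theorem LinearEquiv.apply_apply_eq_of_span_eq_top {K V W ι : Type*} [Field K]
    [AddCommGroup V] [Module K V] [AddCommGroup W] [Module K W] {v : ι → V}
    (hv : Submodule.span K (Set.range v) = ⊤) (φ : V ≃ₗ[K] W) {T : Module.End K V}
    {S : Module.End K W} (h : ∀ i, φ (T (v i)) = S (φ (v i))) (x : V) :
    φ (T x) = S (φ x) :=
  LinearMap.congr_fun (LinearMap.ext_on_range hv (f := φ.toLinearMap ∘ₗ T)
    (g := S ∘ₗ φ.toLinearMap) h) x

section CaseIV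

variable {Γ : Type*} [CommGroup Γ] {V : Type*} [AddCommGroup V] [Module ℂ V]
  {ρ : Γ → Module.End ℂ V} {X Y : Module.End ℂ V} {g₁ g₂ : Γ} {χ₁ : Γ →* ℂˣ}

theorem exists_lowestWeightVector [FiniteDimensional ℂ V] [Nontrivial V] {χ₂ : Γ →* ℂˣ}
    (hmul : ∀ a b, ρ (a * b) = ρ a * ρ b) (hone : ρ 1 = 1)
    (hYc : ∀ h, ρ h * Y = (χ₂ h : ℂ) • (Y * ρ h)) {r : ℕ} (hYr : Y ^ r = 0) :
    ∃ v : V, v ≠ 0 ∧ Y v = 0 ∧ ∃ η : Γ →* ℂˣ, ∀ h, ρ h v = (η h : ℂ) • v := by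
  have hker : LinearMap.ker Y ≠ ⊥ := fun h =>
    IsNilpotent.not_isUnit ⟨r, hYr⟩ ((LinearMap.isUnit_iff_ker_eq_bot Y).mpr h)
  have hρker : ∀ h, ∀ v ∈ LinearMap.ker Y, ρ h v ∈ LinearMap.ker Y := fun h v hv => by
    have := LinearMap.congr_fun (hYc h) v
    rw [Module.End.mul_apply, LinearMap.mem_ker.mp hv, map_zero, LinearMap.smul_apply,
      Module.End.mul_apply, eq_comm, smul_eq_zero] at this
    exact this.resolve_left (Units.ne_zero _)
  have hcomm : ∀ a b, Commute (ρ a) (ρ b) := fun a b => by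
    rw [Commute, SemiconjBy, ← hmul, ← hmul, mul_comm]
  obtain ⟨v, hvY, hv, hρv⟩ := exists_common_eigenvector_of_commute ρ hcomm _ hker hρker
  exact ⟨v, hv, hvY, exists_monoidHom_of_common_eigenvector ρ hmul hone hv hρv⟩

theorem stable_span_range_pow_apply (hXc : ∀ h, ρ h * X = (χ₁ h : ℂ) • (X * ρ h))
    (hKX : ρ (g₁ * g₂) * X = (χ₁ g₁ : ℂ) ^ 2 • (X * ρ (g₁ * g₂)))
    (hXY : X * Y = ((χ₁ g₁ : ℂ))⁻¹ • (Y * X) + ρ (g₁ * g₂) - 1)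
    {w : V} (hYw : Y w = 0) (hρw : ∀ h, ∃ μ : ℂ, ρ h w = μ • w) :
    Stable2 ρ X Y (Submodule.span ℂ (Set.range fun i => (X ^ i) w)) := by
  set S := Submodule.span ℂ (Set.range fun i => (X ^ i) w)
  have hS : ∀ T : Module.End ℂ V, (∀ i, T ((X ^ i) w) ∈ S) → ∀ v ∈ S, T v ∈ S := fun T hT =>
    (Submodule.span_le (p := S.comap T)).mpr (Set.range_subset_iff.mpr hT)
  obtain ⟨γ, hγ⟩ := hρw (g₁ * g₂)
  refine ⟨hS X fun i => ?_, hS Y fun i => ?_, fun h => hS (ρ h) fun i => ?_⟩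
  · rw [← Module.End.mul_apply, ← pow_succ']
    exact Submodule.subset_span ⟨i + 1, rfl⟩
  · cases i with
    | zero => rw [pow_zero, Module.End.one_apply, hYw]; exact S.zero_mem
    | succ i =>
      rw [apply_pow_succ_apply_eq_cseq_smul (Units.ne_zero _) hXY hKX hYw hγ]
      exact S.smul_mem _ (Submodule.subset_span ⟨i, rfl⟩)
  · obtain ⟨μ, hμ⟩ := hρw h
    rw [Module.End.apply_pow_apply_of_mul_eq_smul_mul (hXc h) hμ]
    exact S.smul_mem _ (Submodule.subset_span ⟨i, rfl⟩)

theorem span_range_pow_apply_eq_top (hirr : Irred2 ρ X Y)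
    (hXc : ∀ h, ρ h * X = (χ₁ h : ℂ) • (X * ρ h))
    (hKX : ρ (g₁ * g₂) * X = (χ₁ g₁ : ℂ) ^ 2 • (X * ρ (g₁ * g₂)))
    (hXY : X * Y = ((χ₁ g₁ : ℂ))⁻¹ • (Y * X) + ρ (g₁ * g₂) - 1)
    {w : V} (hw : w ≠ 0) (hYw : Y w = 0) (hρw : ∀ h, ∃ μ : ℂ, ρ h w = μ • w) :
    Submodule.span ℂ (Set.range fun i => (X ^ i) w) = ⊤ := by
  refine (hirr.2 _ (stable_span_range_pow_apply hXc hKX hXY hYw hρw)).resolve_left fun h => hw ?_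
  have : (X ^ 0) w ∈ Submodule.span ℂ (Set.range fun i => (X ^ i) w) :=
    Submodule.subset_span ⟨0, rfl⟩
  simpa [h] using this

/-- If `c m = 0` with `0 < m < N`, then `Y` kills `X ^ m v₀`, whose ladder therefore spans a
subrepresentation; it misses `v₀`, as all its vectors have vanishing `0`-th coordinate. -/
theorem le_of_cseq_eq_zero (hirr : Irred2 ρ X Y)
    (hXc : ∀ h, ρ h * X = (χ₁ h : ℂ) • (X * ρ h))
    (hKX : ρ (g₁ * g₂) * X = (χ₁ g₁ : ℂ) ^ 2 • (X * ρ (g₁ * g₂)))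
    (hXY : X * Y = ((χ₁ g₁ : ℂ))⁻¹ • (Y * X) + ρ (g₁ * g₂) - 1)
    {η : Γ →* ℂˣ} {v₀ : V} (hYv₀ : Y v₀ = 0) (hη : ∀ h, ρ h v₀ = (η h : ℂ) • v₀)
    {N : ℕ} (φ : V ≃ₗ[ℂ] (Fin N → ℂ)) (hφ : ∀ i, φ ((X ^ i) v₀) = natSingle ℂ N i)
    {m : ℕ} (hm : 0 < m) (hcm : cseq (χ₁ g₁ : ℂ) 1 (η (g₁ * g₂) : ℂ) 0 m = 0) : N ≤ m := by
  by_contra! hmN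
  have hw : (X ^ m) v₀ ≠ 0 := fun h => by
    simpa [h, natSingle] using congrFun (hφ m) ⟨m, hmN⟩
  have hYw : Y ((X ^ m) v₀) = 0 := by
    obtain ⟨k, rfl⟩ := Nat.exists_eq_add_of_lt hm
    rw [apply_pow_succ_apply_eq_cseq_smul (Units.ne_zero _) hXY hKX hYv₀ (hη _), hcm, zero_smul]
  have htop := span_range_pow_apply_eq_top hirr hXc hKX hXY hw hYw fun h =>
    ⟨_, Module.End.apply_pow_apply_of_mul_eq_smul_mul (hXc h) (hη h) m⟩
  let ℓ : V →ₗ[ℂ] ℂ := LinearMap.proj ⟨0, hm.trans hmN⟩ ∘ₗ φ.toLinearMap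
  have hℓ : Submodule.span ℂ (Set.range fun i => (X ^ i) ((X ^ m) v₀)) ≤ LinearMap.ker ℓ := by
    refine Submodule.span_le.mpr (Set.range_subset_iff.mpr fun i => ?_)
    simp only [SetLike.mem_coe, LinearMap.mem_ker, ℓ, LinearMap.comp_apply, LinearEquiv.coe_coe,
      ← Module.End.mul_apply, ← pow_add, hφ, LinearMap.coe_proj, Function.eval, natSingle]
    exact if_neg (by omega)
  have h0 : ℓ ((X ^ 0) v₀) = 0 := hℓ (htop ▸ Submodule.mem_top)
  simp only [ℓ, LinearMap.comp_apply, LinearEquiv.coe_coe, hφ, LinearMap.coe_proj,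
    Function.eval, natSingle, if_pos] at h0
  exact one_ne_zero h0

theorem exists_linearEquiv_L_of_lowestWeightVector {r : ℕ} (hq : IsPrimitiveRoot (χ₁ g₁ : ℂ) r)
    (hirr : Irred2 ρ X Y) (hXc : ∀ h, ρ h * X = (χ₁ h : ℂ) • (X * ρ h))
    (hKX : ρ (g₁ * g₂) * X = (χ₁ g₁ : ℂ) ^ 2 • (X * ρ (g₁ * g₂)))
    (hXY : X * Y = ((χ₁ g₁ : ℂ))⁻¹ • (Y * X) + ρ (g₁ * g₂) - 1) (hXr : X ^ r = 0)
    {η : Γ →* ℂˣ} {v₀ : V} (hv₀ : v₀ ≠ 0) (hYv₀ : Y v₀ = 0)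
    (hη : ∀ h, ρ h v₀ = (η h : ℂ) • v₀) :
    ∃ N : ℕ, 0 < N ∧ cseq (χ₁ g₁ : ℂ) 1 (η (g₁ * g₂) : ℂ) 0 N = 0 ∧
      (∀ m : ℕ, 0 < m → cseq (χ₁ g₁ : ℂ) 1 (η (g₁ * g₂) : ℂ) 0 m = 0 → N ≤ m) ∧
      ∃ φ : V ≃ₗ[ℂ] (Fin N → ℂ),
        (∀ v : V, φ (X v) = fX N (φ v)) ∧
        (∀ v : V, φ (Y v) = fY N (cseq (χ₁ g₁ : ℂ) 1 (η (g₁ * g₂) : ℂ) 0) (φ v)) ∧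
        ∀ (h : Γ) (v : V), φ (ρ h v) = fRho N χ₁ η h (φ v) := by
  classical
  have hex : ∃ n, (X ^ n) v₀ = 0 := ⟨r, by rw [hXr, LinearMap.zero_apply]⟩
  set N := Nat.find hex
  have hN : 0 < N := (Nat.find_pos hex).mpr (by simpa using hv₀)
  have hvlt : ∀ i < N, (X ^ i) v₀ ≠ 0 := fun i => Nat.find_min hex
  have hvge : ∀ i, N ≤ i → (X ^ i) v₀ = 0 := fun i hi => by
    rw [← Nat.sub_add_cancel hi, pow_add, Module.End.mul_apply, Nat.find_spec hex, map_zero]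
  have hY := apply_pow_succ_apply_eq_cseq_smul (Units.ne_zero _) hXY hKX hYv₀ (hη _)
  have htop := span_range_pow_apply_eq_top hirr hXc hKX hXY hv₀ hYv₀ fun h => ⟨_, hη h⟩
  have hli := Module.End.linearIndependent_pow_apply hq (Nat.find_le (hXr ▸ rfl))
    (Units.ne_zero (η g₁)) (hXc g₁) (hη g₁) hvlt
  obtain ⟨φ, hφ⟩ := exists_linearEquiv_apply_eq_natSingle hli htop hvge
  refine ⟨N, hN, ?_, fun m => le_of_cseq_eq_zero hirr hXc hKX hXY hYv₀ hη φ hφ, φ, ?_, ?_, ?_⟩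
  · obtain ⟨n, hn⟩ := Nat.exists_eq_add_one_of_ne_zero hN.ne'
    have h := hY n
    rw [hvge (n + 1) hn.le, map_zero, eq_comm, smul_eq_zero] at h
    rw [hn]
    exact h.resolve_right (hvlt n (by omega))
  · refine φ.apply_apply_eq_of_span_eq_top htop fun i => ?_
    rw [← Module.End.mul_apply, ← pow_succ', hφ, hφ, fX_natSingle]
  · refine φ.apply_apply_eq_of_span_eq_top htop fun i => ?_
    rcases i with _ | i
    · rw [hφ, fY_natSingle_zero, pow_zero, Module.End.one_apply, hYv₀, map_zero]
    rcases lt_or_ge (i + 1) N with hi | hi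
    · rw [hY, map_smul, hφ, hφ, fY_natSingle_succ hi]
    · rw [hvge _ hi, map_zero, map_zero, map_zero]
  · refine fun h => φ.apply_apply_eq_of_span_eq_top htop fun i => ?_
    rw [Module.End.apply_pow_apply_of_mul_eq_smul_mul (hXc h) (hη h), map_smul, hφ,
      fRho_natSingle]

end CaseIV

theorem caseIV_classification_general {Γ : Type*} [CommGroup Γ] (g₁ g₂ : Γ)
    (χ₁ χ₂ : Γ →* ℂˣ) (hχ₂ : χ₂ = χ₁⁻¹) (h12 : χ₁ g₂ * χ₂ g₁ = 1)
    (r : ℕ) (hq : IsPrimitiveRoot ((χ₁ g₁ : ℂˣ) : ℂ) r)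
    (Λ : Subgroup Γ) (ξ : ↥Λ →* ℂˣ)
    (V : Type*) [AddCommGroup V] [Module ℂ V] [FiniteDimensional ℂ V]
    (ρ : Γ → Module.End ℂ V) (X Y : Module.End ℂ V)
    (hrep : IsRepIV g₁ g₂ χ₁ χ₂ Λ ξ r ρ X Y) (hirr : Irred2 ρ X Y) :
    ∃ η : Γ →* ℂˣ, (∀ g : Λ, η (g : Γ) = ξ g) ∧
      ∃ N : ℕ, 0 < N ∧ cseq ((χ₁ g₁ : ℂˣ) : ℂ) 1 ((η (g₁ * g₂) : ℂˣ) : ℂ) 0 N = 0 ∧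
        (∀ m : ℕ, 0 < m →
          cseq ((χ₁ g₁ : ℂˣ) : ℂ) 1 ((η (g₁ * g₂) : ℂˣ) : ℂ) 0 m = 0 → N ≤ m) ∧
        ∃ φ : V ≃ₗ[ℂ] (Fin N → ℂ),
          (∀ v : V, φ (X v) = fX N (φ v)) ∧
          (∀ v : V, φ (Y v) =
            fY N (cseq ((χ₁ g₁ : ℂˣ) : ℂ) 1 ((η (g₁ * g₂) : ℂˣ) : ℂ) 0) (φ v)) ∧
          ∀ (h : Γ) (v : V), φ (ρ h v) = fRho N χ₁ η h (φ v) := by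
  obtain ⟨⟨hmul, hone, hXc, hYc, hΛξ⟩, hXr, hYr, hXY⟩ := hrep
  obtain ⟨w, hw⟩ := hirr.1
  have : Nontrivial V := nontrivial_of_ne w 0 hw
  obtain ⟨v₀, hv₀, hYv₀, η, hη⟩ := exists_lowestWeightVector hmul hone hYc hYr
  have hg₂ : χ₁ g₂ = χ₁ g₁ := by rwa [hχ₂, MonoidHom.inv_apply, mul_inv_eq_one] at h12
  have hKX : ρ (g₁ * g₂) * X = (χ₁ g₁ : ℂ) ^ 2 • (X * ρ (g₁ * g₂)) := by
    rw [hXc, map_mul, hg₂, Units.val_mul, sq]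
  refine ⟨η, fun g => Units.ext (smul_left_injective ℂ hv₀ ?_),
    exists_linearEquiv_L_of_lowestWeightVector hq hirr hXc hKX hXY hXr hv₀ hYv₀ hη⟩
  change (η g : ℂ) • v₀ = (ξ g : ℂ) • v₀
  rw [← hη, hΛξ g, LinearMap.smul_apply, Module.End.one_apply]

/-- Case (IV), classification: every irreducible case-IV representation `(V, ρ, X, Y)` is
isomorphic, via a linear isomorphism intertwining `X`, `Y` and every `ρ(h)`, to `L(η)`
for some character `η` of `Γ` with `η|_Λ = ξ`, where `L(η)` is built on `Fin N → ℂ` for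
`N` the least positive integer with `c_N = 0`. -/
theorem caseIV_classification {Γ : Type*} [CommGroup Γ] [Fintype Γ] (g₁ g₂ : Γ)
    (χ₁ χ₂ : Γ →* ℂˣ) (hχ₂ : χ₂ = χ₁⁻¹) (h12 : χ₁ g₂ * χ₂ g₁ = 1)
    (r : ℕ) (hr : 1 < r) (hq : IsPrimitiveRoot ((χ₁ g₁ : ℂˣ) : ℂ) r)
    (Λ : Subgroup Γ) (hΛ : ∀ g : Γ, g ∈ Λ ↔ (χ₁ g = 1 ∧ χ₂ g = 1)) (ξ : ↥Λ →* ℂˣ)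
    (V : Type*) [AddCommGroup V] [Module ℂ V] [FiniteDimensional ℂ V]
    (ρ : Γ → Module.End ℂ V) (X Y : Module.End ℂ V)
    (hrep : IsRepIV g₁ g₂ χ₁ χ₂ Λ ξ r ρ X Y) (hirr : Irred2 ρ X Y) :
    ∃ η : Γ →* ℂˣ, (∀ g : Λ, η (g : Γ) = ξ g) ∧
      ∃ N : ℕ, 0 < N ∧ cseq ((χ₁ g₁ : ℂˣ) : ℂ) 1 ((η (g₁ * g₂) : ℂˣ) : ℂ) 0 N = 0 ∧
        (∀ m : ℕ, 0 < m →
          cseq ((χ₁ g₁ : ℂˣ) : ℂ) 1 ((η (g₁ * g₂) : ℂˣ) : ℂ) 0 m = 0 → N ≤ m) ∧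
        ∃ φ : V ≃ₗ[ℂ] (Fin N → ℂ),
          (∀ v : V, φ (X v) = fX N (φ v)) ∧
          (∀ v : V, φ (Y v) =
            fY N (cseq ((χ₁ g₁ : ℂˣ) : ℂ) 1 ((η (g₁ * g₂) : ℂˣ) : ℂ) 0) (φ v)) ∧
          ∀ (h : Γ) (v : V), φ (ρ h v) = fRho N χ₁ η h (φ v) :=
  caseIV_classification_general g₁ g₂ χ₁ χ₂ hχ₂ h12 r hq Λ ξ V ρ X Y hrep hirr
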